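/- arXiv:1408.6774 — 5 statements merged into one kernel-verified Lean document; each statement's English description precedes it below -/
import Mathlib

section
/- Let A ∈ ℝ^{n×n} and b ∈ ℝ^n with ρ(A) ≤ 0. Then a vector x ∈ ℝ^n satisfies x = (A ⊗ x) ⊕ b if and only if there exists v ∈ (ℝ ∪ {−∞})^n with A ⊗ v = v such that x = (A* ⊗ b) ⊕ v (componentwise maximum). -/
open Finset

/-- Max-plus matrix-vector product: `(A ⊗ x)_i = max_j (a_{ij} + x_j)`. -/
noncomputable def mpMulVec {ι κ : Type*} [Fintype κ] (A : ι → κ → ℝ) (x : κ → ℝ) (i : ι) : ℝ :=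
  ⨆ j, (A i j + x j)

/-- Max-plus matrix-matrix product: `(A ⊗ B)_{ik} = max_j (a_{ij} + b_{jk})`. -/
noncomputable def mpMul {ι κ τ : Type*} [Fintype κ] (A : ι → κ → ℝ) (B : κ → τ → ℝ)
    (i : ι) (k : τ) : ℝ :=
  ⨆ j, (A i j + B j k)

/-- `mpPow1 A s` is the `(s+1)`-st max-plus power of `A`, i.e. `A^{⊗(s+1)}`. -/
noncomputable def mpPow1 {ι : Type*} [Fintype ι] (A : ι → ι → ℝ) : ℕ → ι → ι → ℝ
  | 0 => A
  | (k + 1) => mpMul A (mpPow1 A k)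

/-- Weight of the walk `P 0 → P 1 → ⋯ → P len` in the complete weighted digraph `D(B)`. -/
noncomputable def walkWeight {ι : Type*} (B : ι → ι → ℝ) (len : ℕ) (P : Fin (len + 1) → ι) : ℝ :=
  ∑ t : Fin len, B (P t.castSucc) (P t.succ)

/-- The maximum cycle mean `ρ(A)`: the maximum over all cycles (closed walks of length
`1 ≤ k ≤ n`) of the average weight of the cycle. -/
noncomputable def maxCycleMean {ι : Type*} [Fintype ι] (A : ι → ι → ℝ) : ℝ :=
  sSup { r | ∃ k, 1 ≤ k ∧ k ≤ Fintype.card ι ∧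
    ∃ P : Fin (k + 1) → ι, P 0 = P (Fin.last k) ∧ r = walkWeight A k P / (k : ℝ) }

/-- Kleene star of `A` (meaningful when `ρ(A) ≤ 0`):
`A*_{ii} = max(0, max_{1 ≤ k ≤ n-1} (A^{⊗k})_{ii})` and
`A*_{ij} = max_{1 ≤ k ≤ n-1} (A^{⊗k})_{ij}` for `i ≠ j`. -/
noncomputable def kleeneStar {ι : Type*} [Fintype ι] [DecidableEq ι] (A : ι → ι → ℝ)
    (i j : ι) : ℝ :=
  if i = j then max 0 (⨆ m : Fin (Fintype.card ι - 1), mpPow1 A (m : ℕ) i i)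
  else ⨆ m : Fin (Fintype.card ι - 1), mpPow1 A (m : ℕ) i j

/-- Max-Łukasiewicz matrix-vector product: `(A ⊗_L x)_i = max_j max(0, a_{ij} + x_j - 1)`. -/
noncomputable def lukMulVec {ι κ : Type*} [Fintype κ] (A : ι → κ → ℝ) (x : κ → ℝ) (i : ι) : ℝ :=
  ⨆ j, max 0 (A i j + x j - 1)

/-- Max-Łukasiewicz scalar action: `(λ ⊗_L x)_i = max(0, λ + x_i - 1)`. -/
noncomputable def lukSMul {ι : Type*} (lam : ℝ) (x : ι → ℝ) (i : ι) : ℝ :=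
  max 0 (lam + x i - 1)

/-- Max-Łukasiewicz matrix-matrix product: `(A ⊗_L B)_{ik} = max_j max(0, a_{ij} + b_{jk} - 1)`. -/
noncomputable def lukMul {ι κ τ : Type*} [Fintype κ] (A : ι → κ → ℝ) (B : κ → τ → ℝ)
    (i : ι) (k : τ) : ℝ :=
  ⨆ j, max 0 (A i j + B j k - 1)

/-- `lukPow1 A s` is the `(s+1)`-st Łukasiewicz power of `A`, i.e. `A^{⊗_L (s+1)}`. -/
noncomputable def lukPow1 {ι : Type*} [Fintype ι] (A : ι → ι → ℝ) : ℕ → ι → ι → ℝ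
  | 0 => A
  | (t + 1) => lukMul A (lukPow1 A t)

/-- Max-plus matrix-vector product of a real matrix with a vector over `ℝ ∪ {-∞}` (`EReal`). -/
noncomputable def mpMulVecE {ι κ : Type*} [Fintype κ] (A : ι → κ → ℝ) (v : κ → EReal)
    (i : ι) : EReal :=
  ⨆ j, ((A i j : EReal) + v j)

/-- Node `i` of the weighted digraph `D(B)` is secure if every walk starting at `i` has
nonpositive weight. -/
def SecureNode {ι : Type*} (B : ι → ι → ℝ) (i : ι) : Prop :=
  ∀ (len : ℕ) (P : Fin (len + 1) → ι), P 0 = i → walkWeight B len P ≤ 0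

/-- The partition `(K, L)` of `{1,…,n}` is secure with respect to `D(B)` (with parameter `λ`):
if `L = ∅` this means `D(B)` is `λ`-secure (every walk has weight `≤ λ`); otherwise it means
that every walk starting in `L` whose all other nodes lie in `K` has nonpositive weight.
(If `L` is everything, the latter condition holds trivially, matching the convention.) -/
def SecurePartition {n : ℕ} (B : Fin n → Fin n → ℝ) (lam : ℝ) (K L : Finset (Fin n)) : Prop :=
  if L = ∅ then
    ∀ (len : ℕ) (P : Fin (len + 1) → Fin n), walkWeight B len P ≤ lam
  else
    ∀ (len : ℕ) (P : Fin (len + 1) → Fin n),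
      P 0 ∈ L → (∀ t : Fin (len + 1), t ≠ 0 → P t ∈ K) → walkWeight B len P ≤ 0

/-!
Since `ρ(A) ≤ 0`, cutting a closed subwalk out of a walk does not decrease its weight, so every
walk from `i` to `j` can be shortened to one of length `< n` without losing weight, and `A*_{ij}`
is the greatest weight of a walk from `i` to `j`. Hence `A* ⊗ b` is the least vector `x` with
`(A ⊗ x) ⊕ b ≤ x`, and it satisfies `A* ⊗ b = (A ⊗ A* ⊗ b) ⊕ b`; by distributivity of `A ⊗ ·`
over `⊕`, every `(A* ⊗ b) ⊕ v` with `A ⊗ v = v` is then a solution.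

Conversely, for a solution `x` the iterates `A^k ⊗ x` decrease, and `x ≤ (A^k ⊗ x) ⊕ (A* ⊗ b)`
for every `k`. Their limit `v` in `ℝ ∪ {-∞}` satisfies `A ⊗ v = v`, because a decreasing infimum
commutes with a finite maximum, and `x = (A* ⊗ b) ⊕ v`: where `v_i < x_i`, some iterate is already
below `x_i`, which forces `x_i ≤ (A* ⊗ b)_i`.
-/

section MaxPlusVec

variable {ι κ : Type*} [Fintype κ] (A : ι → κ → ℝ)

theorem le_mpMulVec (x : κ → ℝ) (i : ι) (j : κ) : A i j + x j ≤ mpMulVec A x i :=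
  le_ciSup (f := fun j => A i j + x j) (Set.finite_range _).bddAbove j

theorem mpMulVecE_sup (v w : κ → EReal) :
    mpMulVecE A (v ⊔ w) = mpMulVecE A v ⊔ mpMulVecE A w := by
  funext i
  simp only [mpMulVecE, Pi.sup_apply, ← iSup_sup_eq]
  exact iSup_congr fun j => (max_add_add_left _ _ _).symm

variable [Nonempty κ]

theorem mpMulVec_le_iff {x : κ → ℝ} {i : ι} {c : ℝ} :
    mpMulVec A x i ≤ c ↔ ∀ j, A i j + x j ≤ c :=
  ciSup_le_iff (Set.finite_range _).bddAbove

theorem exists_mpMulVec_eq (x : κ → ℝ) (i : ι) : ∃ j, mpMulVec A x i = A i j + x j := by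
  obtain ⟨j, hj⟩ := exists_eq_ciSup_of_finite (f := fun j => A i j + x j)
  exact ⟨j, hj.symm⟩

theorem mpMulVec_mono : Monotone (mpMulVec A) := fun _ _ hxy i =>
  (mpMulVec_le_iff A).2 fun j => (add_le_add le_rfl (hxy j)).trans (le_mpMulVec A _ i j)

theorem mpMulVec_sup (x y : κ → ℝ) : mpMulVec A (x ⊔ y) = mpMulVec A x ⊔ mpMulVec A y := by
  refine le_antisymm (fun i => (mpMulVec_le_iff A).2 fun j => ?_)
    (sup_le (mpMulVec_mono A le_sup_left) (mpMulVec_mono A le_sup_right))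
  rw [Pi.sup_apply, ← max_add_add_left]
  exact max_le_max (le_mpMulVec A x i j) (le_mpMulVec A y i j)

theorem coe_mpMulVec (x : κ → ℝ) (i : ι) :
    ((mpMulVec A x i : ℝ) : EReal) = mpMulVecE A (fun j => (x j : EReal)) i := by
  obtain ⟨j, hj⟩ := exists_mpMulVec_eq A x i
  refine le_antisymm ?_ (iSup_le fun j' => ?_)
  · rw [hj, EReal.coe_add]
    exact le_iSup (fun j => (A i j : EReal) + x j) j
  · rw [← EReal.coe_add]
    exact EReal.coe_le_coe_iff.2 (le_mpMulVec A x i j')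

end MaxPlusVec

theorem EReal.coe_add_iInf {ι : Sort*} (a : ℝ) (g : ι → EReal) :
    (a : EReal) + ⨅ k, g k = ⨅ k, ((a : EReal) + g k) := by
  let e : EReal ≃o EReal :=
    { toFun := (· + a), invFun := (· - a)
      left_inv := fun _ => EReal.add_sub_cancel_right
      right_inv := fun _ => EReal.sub_add_cancel
      map_rel_iff' := (EReal.addLECancellable_coe a).add_le_add_iff_right }
  simp_rw [add_comm (a : EReal)]
  exact e.map_iInf g

section Walks

variable {ι : Type*} (A : ι → ι → ℝ)

def seqWeight (f : ℕ → ι) (len : ℕ) : ℝ :=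
  ∑ t ∈ range len, A (f t) (f (t + 1))

@[simp]
theorem seqWeight_zero (f : ℕ → ι) : seqWeight A f 0 = 0 := sum_range_zero _

theorem seqWeight_one (f : ℕ → ι) : seqWeight A f 1 = A (f 0) (f 1) := sum_range_one _

theorem seqWeight_succ' (f : ℕ → ι) (len : ℕ) :
    seqWeight A f (len + 1) = A (f 0) (f 1) + seqWeight A (fun t => f (t + 1)) len := by
  rw [seqWeight, sum_range_succ', add_comm]
  rfl

theorem seqWeight_cons (i : ι) (f : ℕ → ι) (len : ℕ) :
    seqWeight A (fun | 0 => i | t + 1 => f t) (len + 1) = A i (f 0) + seqWeight A f len :=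
  seqWeight_succ' A _ len

theorem seqWeight_add (f : ℕ → ι) (s l : ℕ) :
    seqWeight A f (s + l) = seqWeight A f s + seqWeight A (fun t => f (s + t)) l := by
  simp only [seqWeight, sum_range_add, add_assoc]

theorem seqWeight_congr {f g : ℕ → ι} {len : ℕ} (h : ∀ t ≤ len, f t = g t) :
    seqWeight A f len = seqWeight A g len :=
  sum_congr rfl fun t ht => by
    rw [mem_range] at ht
    rw [h t ht.le, h (t + 1) ht]

variable [Fintype ι]

theorem seqWeight_add_le_of_mpMulVec_le {x : ι → ℝ} (hx : mpMulVec A x ≤ x)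
    (f : ℕ → ι) (len : ℕ) : seqWeight A f len + x (f len) ≤ x (f 0) := by
  induction len with
  | zero => simp
  | succ len ih =>
    have hstep := (le_mpMulVec A x (f len) (f (len + 1))).trans (hx (f len))
    have hsucc : seqWeight A f (len + 1) = seqWeight A f len + A (f len) (f (len + 1)) :=
      sum_range_succ _ _
    linarith

theorem seqWeight_le_mpPow1 (m : ℕ) (f : ℕ → ι) :
    seqWeight A f (m + 1) ≤ mpPow1 A m (f 0) (f (m + 1)) := by
  induction m generalizing f with
  | zero => exact (seqWeight_one A f).le
  | succ m ih =>
    rw [seqWeight_succ']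
    exact (add_le_add le_rfl (ih _)).trans
      (le_mpMulVec A (fun t => mpPow1 A m t (f (m + 2))) (f 0) (f 1))

theorem exists_seqWeight_eq_mpPow1 (m : ℕ) (i j : ι) :
    ∃ f : ℕ → ι, f 0 = i ∧ f (m + 1) = j ∧ seqWeight A f (m + 1) = mpPow1 A m i j := by
  induction m generalizing i with
  | zero => exact ⟨fun | 0 => i | _ + 1 => j, rfl, rfl, seqWeight_one A _⟩
  | succ m ih =>
    have : Nonempty ι := ⟨i⟩
    obtain ⟨t, ht⟩ := exists_mpMulVec_eq A (fun t => mpPow1 A m t j) i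
    obtain ⟨f, rfl, hfj, hf⟩ := ih t
    exact ⟨fun | 0 => i | t + 1 => f t, rfl, hfj, by rw [seqWeight_cons, hf]; exact ht.symm⟩

theorem walkWeight_div_le_maxCycleMean {k : ℕ} (hk1 : 1 ≤ k) (hk : k ≤ Fintype.card ι)
    (P : Fin (k + 1) → ι) (hP : P 0 = P (Fin.last k)) :
    walkWeight A k P / k ≤ maxCycleMean A := by
  refine le_csSup (((Set.finite_range fun p : Σ k : Fin (Fintype.card ι + 1), Fin (k + 1) → ι =>
    walkWeight A p.1 p.2 / p.1).subset ?_).bddAbove) ⟨k, hk1, hk, P, hP, rfl⟩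
  rintro r ⟨k, -, hk, P, -, rfl⟩
  exact ⟨⟨⟨k, by omega⟩, P⟩, rfl⟩

theorem seqWeight_nonpos_of_closed (hρ : maxCycleMean A ≤ 0) {f : ℕ → ι} {c : ℕ} (hc : 0 < c)
    (hcard : c ≤ Fintype.card ι) (hf : f c = f 0) : seqWeight A f c ≤ 0 := by
  have hw : walkWeight A c (fun t => f t) = seqWeight A f c :=
    Fin.sum_univ_eq_sum_range (fun t => A (f t) (f (t + 1))) c
  have hmean := (walkWeight_div_le_maxCycleMean A hc hcard (fun t => f t)
    (by simpa using hf.symm)).trans hρ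
  rwa [hw, div_le_iff₀ (by positivity), zero_mul] at hmean

theorem exists_closed_subwalk (f : ℕ → ι) :
    ∃ s c, 0 < c ∧ s + c ≤ Fintype.card ι ∧ f (s + c) = f s := by
  obtain ⟨a, b, hab, h⟩ := Fintype.exists_ne_map_eq_of_card_lt
    (fun u : Fin (Fintype.card ι + 1) => f u) (by simp)
  rcases lt_or_gt_of_ne (Fin.val_ne_of_ne hab) with hlt | hlt
  · exact ⟨a, b - a, by omega, by omega, by rw [Nat.add_sub_cancel' hlt.le]; exact h.symm⟩
  · exact ⟨b, a - b, by omega, by omega, by rw [Nat.add_sub_cancel' hlt.le]; exact h⟩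

theorem exists_shorter_walk_of_card_le (hρ : maxCycleMean A ≤ 0) {f : ℕ → ι} {len : ℕ}
    (hlen : Fintype.card ι ≤ len) : ∃ g : ℕ → ι, ∃ len' < len,
      g 0 = f 0 ∧ g len' = f len ∧ seqWeight A f len ≤ seqWeight A g len' := by
  obtain ⟨s, c, hc, hsc, hcyc⟩ := exists_closed_subwalk f
  obtain ⟨r, rfl⟩ : ∃ r, len = s + c + r := ⟨len - (s + c), by omega⟩
  -- `g` is `f` with the closed subwalk `f s → ⋯ → f (s + c)` cut out.
  set g : ℕ → ι := fun u => if u ≤ s then f u else f (u + c)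
  have hg_tail : (fun t => g (s + t)) = fun t => f (s + c + t) := by
    funext t
    rcases Nat.eq_zero_or_pos t with rfl | ht
    · simp [g, hcyc]
    · simp only [g, if_neg (by omega : ¬ s + t ≤ s), Nat.add_right_comm]
  have hg : seqWeight A g (s + r) = seqWeight A f s + seqWeight A (fun t => f (s + c + t)) r := by
    rw [seqWeight_add, hg_tail, seqWeight_congr A fun t ht => if_pos ht]
  have hcycle : seqWeight A (fun t => f (s + t)) c ≤ 0 :=
    seqWeight_nonpos_of_closed A hρ hc (by omega) hcyc
  refine ⟨g, s + r, by omega, by simp [g], ?_, ?_⟩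
  · rw [← congrFun hg_tail r]
  · rw [hg, seqWeight_add, seqWeight_add]
    linarith

end Walks

section KleeneStar

variable {ι : Type*} [Fintype ι] [DecidableEq ι] (A : ι → ι → ℝ)

theorem zero_le_kleeneStar_self (i : ι) : 0 ≤ kleeneStar A i i := by
  rw [kleeneStar, if_pos rfl]
  exact le_max_left _ _

theorem mpPow1_le_kleeneStar_of_lt {m : ℕ} (hm : m + 1 < Fintype.card ι) (i j : ι) :
    mpPow1 A m i j ≤ kleeneStar A i j := by
  have h : mpPow1 A m i j ≤ ⨆ m' : Fin (Fintype.card ι - 1), mpPow1 A m' i j :=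
    le_ciSup (f := fun m' : Fin (Fintype.card ι - 1) => mpPow1 A m' i j)
      (Set.finite_range _).bddAbove ⟨m, by omega⟩
  rw [kleeneStar]
  split_ifs with hij
  · subst hij
    exact h.trans (le_max_right _ _)
  · exact h

theorem exists_seqWeight_eq_kleeneStar (i j : ι) :
    ∃ len, ∃ f : ℕ → ι, f 0 = i ∧ f len = j ∧ seqWeight A f len = kleeneStar A i j := by
  have hpow : Nonempty (Fin (Fintype.card ι - 1)) → ∃ len, ∃ f : ℕ → ι, f 0 = i ∧ f len = j ∧
      seqWeight A f len = ⨆ m : Fin (Fintype.card ι - 1), mpPow1 A m i j := fun _ => by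
    obtain ⟨m, hm⟩ := exists_eq_ciSup_of_finite (f := fun m : Fin (Fintype.card ι - 1) =>
      mpPow1 A m i j)
    obtain ⟨f, hf0, hfj, hf⟩ := exists_seqWeight_eq_mpPow1 A m i j
    exact ⟨m + 1, f, hf0, hfj, hf.trans hm⟩
  have hempty : ∃ len, ∃ f : ℕ → ι, f 0 = i ∧ f len = i ∧ seqWeight A f len = 0 :=
    ⟨0, fun _ => i, rfl, rfl, seqWeight_zero A _⟩
  rw [kleeneStar]
  split_ifs with hij
  · subst hij
    rcases isEmpty_or_nonempty (Fin (Fintype.card ι - 1)) with hne | hne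
    · rwa [Real.iSup_of_isEmpty, max_self]
    · rcases max_choice 0 (⨆ m : Fin (Fintype.card ι - 1), mpPow1 A m i i) with h | h <;>
        rw [h]
      exacts [hempty, hpow hne]
  · have : 1 < Fintype.card ι := Fintype.one_lt_card_iff.2 ⟨i, j, hij⟩
    exact hpow ⟨⟨0, by omega⟩⟩

variable {A}

theorem seqWeight_le_kleeneStar (hρ : maxCycleMean A ≤ 0) (len : ℕ) (f : ℕ → ι) :
    seqWeight A f len ≤ kleeneStar A (f 0) (f len) := by
  induction len using Nat.strong_induction_on generalizing f with
  | _ len ih =>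
  rcases Nat.lt_or_ge len (Fintype.card ι) with hlt | hge
  · rcases len with _ | m
    · simpa using zero_le_kleeneStar_self A (f 0)
    · exact (seqWeight_le_mpPow1 A m f).trans (mpPow1_le_kleeneStar_of_lt A hlt _ _)
  · obtain ⟨g, len', hlt, hg0, hglen, hle⟩ := exists_shorter_walk_of_card_le A hρ hge
    exact hle.trans (hg0 ▸ hglen ▸ ih len' hlt g)

theorem add_kleeneStar_le (hρ : maxCycleMean A ≤ 0) (i j k : ι) :
    A i j + kleeneStar A j k ≤ kleeneStar A i k := by
  obtain ⟨len, f, rfl, rfl, hf⟩ := exists_seqWeight_eq_kleeneStar A j k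
  rw [← hf, ← seqWeight_cons]
  exact seqWeight_le_kleeneStar hρ (len + 1) _

theorem kleeneStar_add_le {x : ι → ℝ} (hx : mpMulVec A x ≤ x) (i j : ι) :
    kleeneStar A i j + x j ≤ x i := by
  obtain ⟨len, f, rfl, rfl, hf⟩ := exists_seqWeight_eq_kleeneStar A i j
  rw [← hf]
  exact seqWeight_add_le_of_mpMulVec_le A hx f len

end KleeneStar

section Eigenvectors

variable {ι : Type*} [Fintype ι] [Nonempty ι] {A : ι → ι → ℝ}

theorem mpMulVecE_iInf_iterate {x : ι → ℝ} (hx : mpMulVec A x ≤ x) :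
    mpMulVecE A (fun i => ⨅ k, ((mpMulVec A)^[k] x i : EReal)) =
      fun i => ⨅ k, ((mpMulVec A)^[k] x i : EReal) := by
  have hanti : Antitone fun k => (mpMulVec A)^[k] x :=
    (mpMulVec_mono A).antitone_iterate_of_map_le hx
  funext i
  calc ⨆ j, (A i j : EReal) + ⨅ k, ((mpMulVec A)^[k] x j : EReal)
      = ⨆ j, ⨅ k, (A i j : EReal) + ((mpMulVec A)^[k] x j : EReal) := by
        simp only [EReal.coe_add_iInf]
    _ = ⨅ k, ⨆ j, (A i j : EReal) + ((mpMulVec A)^[k] x j : EReal) :=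
        (iInf_iSup_of_antitone (f := fun j k => (A i j : EReal) + ((mpMulVec A)^[k] x j : EReal))
          fun j _ _ hkl => add_le_add le_rfl (EReal.coe_le_coe_iff.2 (hanti hkl j))).symm
    _ = ⨅ k, ((mpMulVec A)^[k + 1] x i : EReal) := by
        simp only [Function.iterate_succ_apply', coe_mpMulVec]
        rfl
    _ = ⨅ k, ((mpMulVec A)^[k] x i : EReal) :=
        Antitone.iInf_nat_add (f := fun k => ((mpMulVec A)^[k] x i : EReal))
          (fun _ _ hkl => EReal.coe_le_coe_iff.2 (hanti hkl i)) 1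

end Eigenvectors

section Solutions

variable {ι : Type*} [Fintype ι] [DecidableEq ι] {A : ι → ι → ℝ} (b : ι → ℝ)

theorem le_mpMulVec_kleeneStar : b ≤ mpMulVec (kleeneStar A) b := fun i =>
  (le_add_of_nonneg_left (zero_le_kleeneStar_self A i)).trans (le_mpMulVec _ b i i)

theorem mpMulVec_kleeneStar_le {x : ι → ℝ} (hx : mpMulVec A x ≤ x) (hb : b ≤ x) :
    mpMulVec (kleeneStar A) b ≤ x := fun i =>
  have : Nonempty ι := ⟨i⟩
  (mpMulVec_le_iff _).2 fun j => (add_le_add le_rfl (hb j)).trans (kleeneStar_add_le hx i j)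

theorem mpMulVec_mpMulVec_kleeneStar_le (hρ : maxCycleMean A ≤ 0) :
    mpMulVec A (mpMulVec (kleeneStar A) b) ≤ mpMulVec (kleeneStar A) b := fun i => by
  have : Nonempty ι := ⟨i⟩
  refine (mpMulVec_le_iff A).2 fun j => ?_
  rw [← le_sub_iff_add_le', mpMulVec_le_iff]
  intro k
  rw [le_sub_iff_add_le', ← add_assoc]
  exact (add_le_add (add_kleeneStar_le hρ i j k) le_rfl).trans (le_mpMulVec _ b i k)

theorem mpMulVec_kleeneStar_eq [Nonempty ι] (hρ : maxCycleMean A ≤ 0) :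
    mpMulVec (kleeneStar A) b = mpMulVec A (mpMulVec (kleeneStar A) b) ⊔ b := by
  have hle : mpMulVec A (mpMulVec (kleeneStar A) b) ⊔ b ≤ mpMulVec (kleeneStar A) b :=
    sup_le (mpMulVec_mpMulVec_kleeneStar_le b hρ) (le_mpMulVec_kleeneStar b)
  exact le_antisymm
    (mpMulVec_kleeneStar_le b ((mpMulVec_mono A hle).trans le_sup_left) le_sup_right) hle

theorem le_iterate_sup_mpMulVec_kleeneStar [Nonempty ι] (hρ : maxCycleMean A ≤ 0) {x : ι → ℝ}
    (hx : x = mpMulVec A x ⊔ b) (k : ℕ) :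
    x ≤ (mpMulVec A)^[k] x ⊔ mpMulVec (kleeneStar A) b := by
  induction k with
  | zero => exact le_sup_left
  | succ k ih =>
    rw [Function.iterate_succ_apply']
    calc x = mpMulVec A x ⊔ b := hx
      _ ≤ mpMulVec A ((mpMulVec A)^[k] x ⊔ mpMulVec (kleeneStar A) b) ⊔ b :=
        sup_le_sup_right (mpMulVec_mono A ih) b
      _ = mpMulVec A ((mpMulVec A)^[k] x) ⊔ mpMulVec (kleeneStar A) b := by
        rw [mpMulVec_sup, sup_assoc, ← mpMulVec_kleeneStar_eq b hρ]

theorem coe_eq_kleeneStar_sup_iInf_iterate [Nonempty ι] (hρ : maxCycleMean A ≤ 0) {x : ι → ℝ}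
    (hx : x = mpMulVec A x ⊔ b) (i : ι) :
    (x i : EReal) = max (mpMulVec (kleeneStar A) b i : EReal)
      (⨅ k, ((mpMulVec A)^[k] x i : EReal)) := by
  have hxs : mpMulVec (kleeneStar A) b ≤ x :=
    mpMulVec_kleeneStar_le b (le_sup_left.trans_eq hx.symm) (le_sup_right.trans_eq hx.symm)
  refine le_antisymm ?_ (max_le (EReal.coe_le_coe_iff.2 (hxs i)) (iInf_le_of_le 0 le_rfl))
  by_cases hv : (x i : EReal) ≤ ⨅ k, ((mpMulVec A)^[k] x i : EReal)
  · exact hv.trans (le_max_right _ _)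
  · obtain ⟨k, hk⟩ := iInf_lt_iff.1 (not_le.1 hv)
    have hxk := le_iterate_sup_mpMulVec_kleeneStar b hρ hx k i
    refine le_max_of_le_left (EReal.coe_le_coe_iff.2 ?_)
    exact (le_sup_iff.1 hxk).resolve_left (EReal.coe_lt_coe_iff.1 hk).not_ge

theorem eq_mpMulVec_sup_of_coe_eq [Nonempty ι] (hρ : maxCycleMean A ≤ 0) {x : ι → ℝ}
    {v : ι → EReal} (hv : mpMulVecE A v = v)
    (hxv : ∀ i, (x i : EReal) = max (mpMulVec (kleeneStar A) b i : EReal) (v i)) :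
    x = mpMulVec A x ⊔ b := by
  have coe_max : ∀ p q : ℝ, ((max p q : ℝ) : EReal) = max (p : EReal) q :=
    fun _ _ => EReal.coe_strictMono.monotone.map_max
  funext i
  apply EReal.coe_injective
  calc (x i : EReal)
      = max ((max (mpMulVec A (mpMulVec (kleeneStar A) b) i) (b i) : ℝ) : EReal) (v i) := by
        rw [hxv i, congrFun (mpMulVec_kleeneStar_eq b hρ) i]
        rfl
    _ = max (mpMulVecE A ((fun j => (mpMulVec (kleeneStar A) b j : EReal)) ⊔ v) i) (b i) := by
        rw [coe_max, coe_mpMulVec, mpMulVecE_sup, hv, max_right_comm]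
        rfl
    _ = ((mpMulVec A x ⊔ b) i : ℝ) := by
        rw [← show (fun j => (x j : EReal)) = _ ⊔ v from funext hxv, Pi.sup_apply, coe_max,
          coe_mpMulVec]

end Solutions

/-- when `ρ(A) ≤ 0`, the solutions of `x = (A ⊗ x) ⊕ b` are exactly the vectors
`x = (A* ⊗ b) ⊕ v` where `v ∈ (ℝ ∪ {-∞})^n` satisfies `A ⊗ v = v`. -/
theorem stmt2 {n : ℕ} (hn : 0 < n) (A : Fin n → Fin n → ℝ) (b : Fin n → ℝ)
    (hrho : maxCycleMean A ≤ 0) (x : Fin n → ℝ) :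
    (∀ i, x i = max (mpMulVec A x i) (b i)) ↔
      ∃ v : Fin n → EReal, (∀ i, mpMulVecE A v i = v i) ∧
        ∀ i, (x i : EReal) = max ((mpMulVec (kleeneStar A) b i : ℝ) : EReal) (v i) := by
  have : Nonempty (Fin n) := Fin.pos_iff_nonempty.mp hn
  rw [show (∀ i, x i = max (mpMulVec A x i) (b i)) ↔ x = mpMulVec A x ⊔ b from funext_iff.symm]
  constructor
  · intro hx
    have hsuper : mpMulVec A x ≤ x := le_sup_left.trans_eq hx.symm
    exact ⟨_, congrFun (mpMulVecE_iInf_iterate hsuper),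
      coe_eq_kleeneStar_sup_iInf_iterate b hrho hx⟩
  · rintro ⟨v, hv, hxv⟩
    exact eq_mpMulVec_sup_of_coe_eq b hrho (funext hv) hxv
end

section
/- Let A ∈ [0,1]^{n×n} and λ ∈ [0,1) .There exists a nonzero background Łukasiewicz eigenvector of A associated with λ if and only if there exists a column index j with max_i a_{ij} < 1. -/
open Finset

/-!
If `x ≤ 1 - λ` componentwise then `λ ⊗_L x = 0`, so a background vector is an eigenvector exactly
when `A ⊗_L x = 0`, i.e. when `a_{ij} + x_j ≤ 1` for all `i, j`. A nonzero such `x` forces the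
column `j` of any nonzero entry `x_j` to satisfy `max_i a_{ij} ≤ 1 - x_j < 1`. Conversely, if
`s = max_i a_{ij} < 1`, the vector `min(1 - λ, 1 - s) e_j` works.
-/

section Lukasiewicz

variable {ι κ : Type*}

lemma lukSMul_eq_zero_iff (lam : ℝ) (x : ι → ℝ) (i : ι) :
    lukSMul lam x i = 0 ↔ lam + x i ≤ 1 := by
  rw [lukSMul, max_eq_left_iff, sub_nonpos]

lemma lukMulVec_eq_zero_iff [Fintype κ] (A : ι → κ → ℝ) (x : κ → ℝ) (i : ι) :
    lukMulVec A x i = 0 ↔ ∀ j, A i j + x j ≤ 1 := by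
  refine ⟨fun h j => ?_, fun h => ?_⟩
  · have hj : max 0 (A i j + x j - 1) ≤ lukMulVec A x i :=
      le_ciSup (f := fun j => max 0 (A i j + x j - 1)) (Finite.bddAbove_range _) j
    linarith [le_max_right 0 (A i j + x j - 1)]
  · refine le_antisymm (Real.iSup_le (fun j => max_le le_rfl ?_) le_rfl)
      (Real.iSup_nonneg fun j => le_max_left _ _)
    linarith [h j]

lemma single_apply_mem_Icc [DecidableEq ι] {c : ℝ} (hc : 0 ≤ c) (j i : ι) :
    (Pi.single j c : ι → ℝ) i ∈ Set.Icc 0 c := by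
  rcases eq_or_ne i j with rfl | hi
  · simpa using hc
  · simpa [hi] using hc

lemma add_single_le_one [DecidableEq ι] {A : ι → ι → ℝ} {j : ι} {c : ℝ} (hA : ∀ i k, A i k ≤ 1)
    (hj : ∀ i, A i j + c ≤ 1) (i k : ι) : A i k + (Pi.single j c : ι → ℝ) k ≤ 1 := by
  rcases eq_or_ne k j with rfl | hk
  · simpa using hj i
  · simpa [hk] using hA i k

variable [Fintype ι] {A : ι → ι → ℝ} {lam : ℝ}

lemma lukMulVec_eq_lukSMul_iff_of_le_one_sub {x : ι → ℝ} (hx : ∀ i, x i ≤ 1 - lam) :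
    (∀ i, lukMulVec A x i = lukSMul lam x i) ↔ ∀ i j, A i j + x j ≤ 1 := by
  have hsmul : ∀ i, lukSMul lam x i = 0 := fun i =>
    (lukSMul_eq_zero_iff lam x i).2 (by linarith [hx i])
  simp only [hsmul, lukMulVec_eq_zero_iff]

lemma exists_ciSup_lt_one_of_background {x : ι → ℝ} (hx : ∀ i, x i ∈ Set.Icc (0 : ℝ) 1)
    (hxb : ∀ i, x i ≤ 1 - lam) (hx0 : x ≠ 0) (heig : ∀ i, lukMulVec A x i = lukSMul lam x i) :
    ∃ j, (⨆ i, A i j) < 1 := by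
  obtain ⟨j, hj⟩ := Function.ne_iff.mp hx0
  have hxj : 0 < x j := (hx j).1.lt_of_ne' hj
  have hcol := (lukMulVec_eq_lukSMul_iff_of_le_one_sub hxb).1 heig
  have hsup : ⨆ i, A i j ≤ 1 - x j :=
    Real.iSup_le (fun i => by linarith [hcol i j]) (by linarith [(hx j).2])
  exact ⟨j, by linarith⟩

variable [DecidableEq ι]

lemma exists_background_of_ciSup_lt_one (hA : ∀ i j, A i j ∈ Set.Icc (0 : ℝ) 1) (hlam : lam < 1)
    {j : ι} (hj : (⨆ i, A i j) < 1) :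
    ∃ x : ι → ℝ, (∀ i, x i ∈ Set.Icc (0 : ℝ) 1) ∧ (∀ i, x i ≤ 1 - lam) ∧ x ≠ 0 ∧
      ∀ i, lukMulVec A x i = lukSMul lam x i := by
  set s := ⨆ i, A i j
  have hs : ∀ i, A i j ≤ s := fun i =>
    le_ciSup (f := fun i => A i j) (Finite.bddAbove_range _) i
  have hs0 : 0 ≤ s := Real.iSup_nonneg fun i => (hA i j).1
  set c := min (1 - lam) (1 - s)
  have hc : 0 < c := lt_min (by linarith) (by linarith)
  have hcl : c ≤ 1 - lam := min_le_left _ _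
  have hcs : c ≤ 1 - s := min_le_right _ _
  have hx := single_apply_mem_Icc hc.le j
  have hxb : ∀ i, (Pi.single j c : ι → ℝ) i ≤ 1 - lam := fun i => (hx i).2.trans hcl
  refine ⟨Pi.single j c, fun i => ⟨(hx i).1, by linarith [(hx i).2]⟩, hxb,
    fun h => hc.ne' (by simpa using congrFun h j),
    (lukMulVec_eq_lukSMul_iff_of_le_one_sub hxb).2
      (add_single_le_one (fun i k => (hA i k).2) fun i => by linarith [hs i])⟩

end Lukasiewicz

theorem stmt5_general {n : ℕ} (A : Fin n → Fin n → ℝ)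
    (hA : ∀ i j, A i j ∈ Set.Icc (0 : ℝ) 1) (lam : ℝ) (hlam1 : lam < 1) :
    (∃ x : Fin n → ℝ, (∀ i, x i ∈ Set.Icc (0 : ℝ) 1) ∧ (∀ i, x i ≤ 1 - lam) ∧ x ≠ 0 ∧
        ∀ i, lukMulVec A x i = lukSMul lam x i) ↔
      ∃ j, (⨆ i, A i j) < 1 :=
  ⟨fun ⟨_, hx, hxb, hx0, heig⟩ => exists_ciSup_lt_one_of_background hx hxb hx0 heig,
    fun ⟨_, hj⟩ => exists_background_of_ciSup_lt_one hA hlam1 hj⟩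

/-- for `λ ∈ [0,1)`, a nonzero background Łukasiewicz eigenvector exists iff some
column of `A` has maximum entry `< 1`. -/
theorem stmt5 {n : ℕ} (hn : 0 < n) (A : Fin n → Fin n → ℝ)
    (hA : ∀ i j, A i j ∈ Set.Icc (0 : ℝ) 1) (lam : ℝ) (hlam0 : 0 ≤ lam) (hlam1 : lam < 1) :
    (∃ x : Fin n → ℝ, (∀ i, x i ∈ Set.Icc (0 : ℝ) 1) ∧ (∀ i, x i ≤ 1 - lam) ∧ x ≠ 0 ∧
        ∀ i, lukMulVec A x i = lukSMul lam x i) ↔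
      ∃ j, (⨆ i, A i j) < 1 :=
  stmt5_general A hA lam hlam1
end

section
/- Let A ∈ [0,1]^{n×n} have maximum cycle mean ρ(A) < 1. Then for every λ ∈ [0,1) there exists a nonzero background Łukasiewicz eigenvector of A associated with λ. -/
/-!
If every column `j` of `A` had an entry `a_{f(j) j} = 1`, following `f` backwards from a periodic
point of `f` would trace a cycle of mean `1`. Hence `ρ(A) < 1` gives a column `j₀` whose entries
are all below `1`, and for small `ε > 0` the vector `x = ε e_{j₀}` has `a_{ij} + x_j ≤ 1` and
`λ + x_i ≤ 1` everywhere, so `A ⊗_L x = 0 = λ ⊗_L x`.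
-/

open Finset

namespace Function

theorem exists_mem_periodicPts {α : Type*} [Finite α] [Nonempty α] (f : α → α) :
    ∃ y, y ∈ periodicPts f := by
  obtain ⟨x⟩ := ‹Nonempty α›
  obtain ⟨m, n, heq, hne⟩ : ∃ m n, f^[m] x = f^[n] x ∧ m ≠ n := by
    simpa [Injective] using not_injective_infinite_finite (f^[·] x)
  wlog hmn : m < n generalizing m n
  · exact this n m heq.symm hne.symm (by omega)
  refine ⟨f^[m] x, mk_mem_periodicPts (n := n - m) (by omega) ?_⟩
  rw [IsPeriodicPt, IsFixedPt, ← iterate_add_apply, Nat.sub_add_cancel hmn.le, heq]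

end Function

section MaxCycleMean

variable {ι : Type*} [Fintype ι]

theorem walkWeight_le_mul_sup (A : ι → ι → ℝ) (len : ℕ) (P : Fin (len + 1) → ι) :
    walkWeight A len P ≤ len * ⨆ p : ι × ι, A p.1 p.2 := by
  calc walkWeight A len P ≤ ∑ _t : Fin len, ⨆ p : ι × ι, A p.1 p.2 :=
        Finset.sum_le_sum fun t _ =>
          le_ciSup (f := fun p : ι × ι => A p.1 p.2) (Set.finite_range _).bddAbove
            (P t.castSucc, P t.succ)
    _ = len * ⨆ p : ι × ι, A p.1 p.2 := by simp

theorem cycleMean_le_maxCycleMean (A : ι → ι → ℝ) {k : ℕ} (hk : 1 ≤ k)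
    (hkn : k ≤ Fintype.card ι) (P : Fin (k + 1) → ι) (hP : P 0 = P (Fin.last k)) :
    walkWeight A k P / k ≤ maxCycleMean A := by
  refine le_csSup ⟨⨆ p : ι × ι, A p.1 p.2, ?_⟩ ⟨k, hk, hkn, P, hP, rfl⟩
  rintro _ ⟨k', hk', -, P', -, rfl⟩
  rw [div_le_iff₀ (by exact_mod_cast hk'), mul_comm]
  exact walkWeight_le_mul_sup A k' P'

theorem le_maxCycleMean_of_forall_le_apply [Nonempty ι] (A : ι → ι → ℝ) (c : ℝ) (f : ι → ι)
    (hf : ∀ j, c ≤ A (f j) j) : c ≤ maxCycleMean A := by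
  obtain ⟨y, hy⟩ := Function.exists_mem_periodicPts f
  set k := Function.minimalPeriod f y
  have hk : 0 < k := Function.minimalPeriod_pos_of_mem_periodicPts hy
  let P : Fin (k + 1) → ι := fun m => f^[k - m] y
  have hP : P 0 = P (Fin.last k) := by
    simp [P, k]
  have hstep (t : Fin k) : P t.castSucc = f (P t.succ) := by
    simp only [P, Fin.val_castSucc, Fin.val_succ, ← Function.iterate_succ_apply' f]
    congr 2
    omega
  have hweight : k * c ≤ walkWeight A k P := by
    calc (k : ℝ) * c = ∑ _t : Fin k, c := by simp
      _ ≤ walkWeight A k P := Finset.sum_le_sum fun t _ => hstep t ▸ hf _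
  calc c = k * c / k := by field_simp
    _ ≤ walkWeight A k P / k := by gcongr
    _ ≤ maxCycleMean A := cycleMean_le_maxCycleMean A hk Function.minimalPeriod_le_card P hP

theorem exists_forall_lt_of_maxCycleMean_lt [Nonempty ι] {A : ι → ι → ℝ} {c : ℝ}
    (h : maxCycleMean A < c) : ∃ j, ∀ i, A i j < c := by
  by_contra! hcol
  choose f hf using hcol
  exact h.not_ge (le_maxCycleMean_of_forall_le_apply A c f hf)

end MaxCycleMean

section Lukasiewicz

variable {ι κ : Type*} [Fintype κ]

theorem lukMulVec_eq_zero {A : ι → κ → ℝ} {x : κ → ℝ} (h : ∀ i j, A i j + x j ≤ 1) :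
    lukMulVec A x = 0 := by
  ext i
  simp only [lukMulVec, Pi.zero_apply, max_eq_left (sub_nonpos.2 (h i _)), Real.iSup_const_zero]

theorem lukSMul_eq_zero {lam : ℝ} {x : ι → ℝ} (h : ∀ i, lam + x i ≤ 1) : lukSMul lam x = 0 := by
  ext i
  exact max_eq_left (sub_nonpos.2 (h i))

theorem exists_background_eigenvector_of_forall_lt_one [Fintype ι] [DecidableEq ι]
    {A : ι → ι → ℝ} (hA : ∀ i j, A i j ∈ Set.Icc (0 : ℝ) 1) {j₀ : ι}
    (hj₀ : ∀ i, A i j₀ < 1) {lam : ℝ} (hlam : lam < 1) :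
    ∃ x : ι → ℝ, (∀ j, x j ∈ Set.Icc (0 : ℝ) 1) ∧ (∀ j, x j ≤ 1 - lam) ∧ x ≠ 0 ∧
      lukMulVec A x = lukSMul lam x := by
  have : Nonempty ι := ⟨j₀⟩
  obtain ⟨i₀, hi₀⟩ := Finite.exists_max fun i => A i j₀
  set ε := min (1 - lam) (1 - A i₀ j₀)
  have hε : 0 < ε := lt_min (by linarith) (by linarith [hj₀ i₀])
  have hε₁ : ε ≤ 1 - A i₀ j₀ := min_le_right _ _
  have hε_lam : ε ≤ 1 - lam := min_le_left _ _
  set x : ι → ℝ := Pi.single j₀ ε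
  have hx (j : ι) : 0 ≤ x j ∧ x j ≤ ε := by
    simp only [x, Pi.single_apply]
    split_ifs <;> constructor <;> linarith
  refine ⟨x, fun j => ⟨(hx j).1, by linarith [hx j, (hA i₀ j₀).1]⟩,
    fun j => (hx j).2.trans hε_lam, fun h => hε.ne' (by simpa [x] using congrFun h j₀), ?_⟩
  rw [lukMulVec_eq_zero, lukSMul_eq_zero]
  · intro j
    linarith [hx j]
  · intro i j
    rcases eq_or_ne j j₀ with rfl | hj
    · linarith [hx j, hi₀ i]
    · simpa [x, hj] using (hA i j).2

end Lukasiewicz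

theorem stmt6_general {n : ℕ} (hn : 0 < n) (A : Fin n → Fin n → ℝ)
    (hA : ∀ i j, A i j ∈ Set.Icc (0 : ℝ) 1) (hrho : maxCycleMean A < 1)
    (lam : ℝ) (hlam1 : lam < 1) :
    ∃ x : Fin n → ℝ, (∀ i, x i ∈ Set.Icc (0 : ℝ) 1) ∧ (∀ i, x i ≤ 1 - lam) ∧ x ≠ 0 ∧
      ∀ i, lukMulVec A x i = lukSMul lam x i := by
  have : Nonempty (Fin n) := ⟨⟨0, hn⟩⟩
  obtain ⟨j₀, hj₀⟩ := exists_forall_lt_of_maxCycleMean_lt hrho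
  obtain ⟨x, hx01, hx_lam, hx0, heig⟩ :=
    exists_background_eigenvector_of_forall_lt_one hA hj₀ hlam1
  exact ⟨x, hx01, hx_lam, hx0, congrFun heig⟩

/-- if `ρ(A) < 1` then for every `λ ∈ [0,1)` there is a nonzero background
Łukasiewicz eigenvector associated with `λ`. -/
theorem stmt6 {n : ℕ} (hn : 0 < n) (A : Fin n → Fin n → ℝ)
    (hA : ∀ i j, A i j ∈ Set.Icc (0 : ℝ) 1) (hrho : maxCycleMean A < 1)
    (lam : ℝ) (hlam0 : 0 ≤ lam) (hlam1 : lam < 1) :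
    ∃ x : Fin n → ℝ, (∀ i, x i ∈ Set.Icc (0 : ℝ) 1) ∧ (∀ i, x i ≤ 1 - lam) ∧ x ≠ 0 ∧
      ∀ i, lukMulVec A x i = lukSMul lam x i :=
  stmt6_general hn A hA hrho lam hlam1
end

section
/- Let A ∈ [0,1]^{n×n} and λ ∈ [0,1] satisfy ρ(A) < λ and max_{i,j} ((A^(λ))*)_{ij} ≤ λ. Then A has exactly one pure Łukasiewicz eigenvector associated with λ, namely the vector x with x_i = 1 − λ + max_j ((A^(λ))*)_{ij} for every i. -/
open Finset

/-!
Put `B = A - λ` and write a pure vector as `x = 1 - λ + z` with `z ≥ 0`. The eigenproblem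
becomes `z i = max (0, max_j (B i j + z j))`, the Bellman equation of the optimal-stopping
problem that walks through `D(B)` collecting arc weights. Since `ρ(A) < λ`, every cycle of `D(B)`
is negative, so cutting cycles out of walks shows that `y i = max_j B*_{ij}` is the value of the
best walk out of `i` and solves the equation. For uniqueness, at a node where `z - y` is maximal
and positive, an arc realizing the maximum for `z` leads to another such node; following such
arcs closes a cycle of weight `≥ 0`. The bound `y ≤ λ` is exactly what makes `x ≤ 1`.
-/

section Walks

variable {ι : Type*}

-- Walks are sequences `ℕ → ι`, so that shifting and cutting them needs no `Fin` casts.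
noncomputable def natWalkWeight (B : ι → ι → ℝ) (k : ℕ) (P : ℕ → ι) : ℝ :=
  ∑ t ∈ range k, B (P t) (P (t + 1))

lemma natWalkWeight_succ (B : ι → ι → ℝ) (k : ℕ) (P : ℕ → ι) :
    natWalkWeight B (k + 1) P = B (P 0) (P 1) + natWalkWeight B k (fun t => P (t + 1)) := by
  rw [natWalkWeight, sum_range_succ', add_comm]
  rfl

lemma natWalkWeight_add (B : ι → ι → ℝ) (a b : ℕ) (P : ℕ → ι) :
    natWalkWeight B (a + b) P = natWalkWeight B a P + natWalkWeight B b (fun t => P (a + t)) := by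
  rw [natWalkWeight, sum_range_add]
  rfl

lemma natWalkWeight_congr (B : ι → ι → ℝ) {k : ℕ} {P Q : ℕ → ι} (h : ∀ t ≤ k, P t = Q t) :
    natWalkWeight B k P = natWalkWeight B k Q :=
  sum_congr rfl fun t ht => by
    rw [mem_range] at ht
    rw [h t ht.le, h (t + 1) ht]

lemma natWalkWeight_cons (B : ι → ι → ℝ) (i : ι) (k : ℕ) (P : ℕ → ι) :
    natWalkWeight B (k + 1) (fun t => if t = 0 then i else P (t - 1)) =
      B i (P 0) + natWalkWeight B k P := by
  rw [natWalkWeight_succ]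
  simp

lemma walkWeight_eq_natWalkWeight (B : ι → ι → ℝ) (k : ℕ) (P : ℕ → ι) :
    walkWeight B k (fun t : Fin (k + 1) => P t) = natWalkWeight B k P := by
  rw [walkWeight, natWalkWeight, ← Fin.sum_univ_eq_sum_range (fun t => B (P t) (P (t + 1)))]
  simp [Fin.val_succ]

lemma sub_le_natWalkWeight {B : ι → ι → ℝ} {z : ι → ℝ} {k : ℕ} {P : ℕ → ι}
    (h : ∀ t < k, z (P t) ≤ B (P t) (P (t + 1)) + z (P (t + 1))) :
    z (P 0) - z (P k) ≤ natWalkWeight B k P := by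
  rw [← sum_range_sub' (fun t => z (P t))]
  exact sum_le_sum fun t ht => by linarith [h t (mem_range.1 ht)]

/-- Cutting the closed subwalk `P a → ⋯ → P b` out of `P`. -/
lemma natWalkWeight_eq_cut_add (B : ι → ι → ℝ) {P : ℕ → ι} {a b k : ℕ} (hab : a ≤ b)
    (hbk : b ≤ k) (hP : P a = P b) :
    natWalkWeight B k P =
      natWalkWeight B (a + (k - b)) (fun t => if t ≤ a then P t else P (t + (b - a))) +
        natWalkWeight B (b - a) (fun t => P (a + t)) := by
  set Q : ℕ → ι := fun t => if t ≤ a then P t else P (t + (b - a))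
  have hQ : (fun t => Q (a + t)) = fun t => P (b + t) := funext fun t => by
    rcases Nat.eq_zero_or_pos t with rfl | ht
    · simp [Q, hP]
    · simp only [Q, if_neg (show ¬a + t ≤ a by omega)]
      congr 1
      omega
  have hP' : (fun t => P (a + (b - a + t))) = fun t => P (b + t) := funext fun t => by
    congr 1
    omega
  rw [natWalkWeight_add, natWalkWeight_congr B (k := a) (fun t ht => if_pos ht), hQ,
    show k = a + (b - a + (k - b)) by omega, natWalkWeight_add, natWalkWeight_add, hP',
    show a + (b - a + (k - b)) - b = k - b by omega]
  ring

variable [Fintype ι]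

lemma exists_lt_le_card_eq (P : ℕ → ι) : ∃ a b, a < b ∧ b ≤ Fintype.card ι ∧ P a = P b := by
  obtain ⟨a, b, hab, heq⟩ := Fintype.exists_ne_map_eq_of_card_lt
    (fun t : Fin (Fintype.card ι + 1) => P t) (by simp)
  rcases lt_or_gt_of_ne hab with h | h
  · exact ⟨a, b, h, Nat.lt_succ_iff.1 b.2, heq⟩
  · exact ⟨b, a, h, Nat.lt_succ_iff.1 a.2, heq.symm⟩

lemma exists_shorter_natWalkWeight_ge {B : ι → ι → ℝ}
    (hcyc : ∀ k P, 1 ≤ k → k ≤ Fintype.card ι → P 0 = P k → natWalkWeight B k P ≤ 0)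
    {k : ℕ} (hk : Fintype.card ι ≤ k) (P : ℕ → ι) :
    ∃ k' < k, ∃ Q : ℕ → ι, Q 0 = P 0 ∧ Q k' = P k ∧ natWalkWeight B k P ≤ natWalkWeight B k' Q := by
  obtain ⟨a, b, hab, hb, hP⟩ := exists_lt_le_card_eq P
  refine ⟨a + (k - b), by omega, fun t => if t ≤ a then P t else P (t + (b - a)), by simp, ?_, ?_⟩
  · dsimp only
    split_ifs with h
    · obtain rfl : b = k := by omega
      rw [show a + (b - b) = a by omega, hP]
    · congr 1
      omega
  · rw [natWalkWeight_eq_cut_add B hab.le (hb.trans hk) hP]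
    have := hcyc (b - a) (fun t => P (a + t)) (by omega) (by omega) (by simp [hP, hab.le])
    linarith

end Walks

section KleeneStar

variable {ι : Type*} [Fintype ι]

lemma natWalkWeight_le_mpPow1 (B : ι → ι → ℝ) (m : ℕ) (P : ℕ → ι) :
    natWalkWeight B (m + 1) P ≤ mpPow1 B m (P 0) (P (m + 1)) := by
  induction m generalizing P with
  | zero => simp [natWalkWeight, mpPow1]
  | succ m ih =>
    rw [natWalkWeight_succ]
    calc B (P 0) (P 1) + natWalkWeight B (m + 1) (fun t => P (t + 1))
        ≤ B (P 0) (P 1) + mpPow1 B m (P 1) (P (m + 2)) := add_le_add le_rfl (ih _)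
      _ ≤ ⨆ l, B (P 0) l + mpPow1 B m l (P (m + 2)) :=
        le_ciSup (f := fun l => B (P 0) l + mpPow1 B m l (P (m + 2)))
          (Finite.bddAbove_range _) (P 1)

lemma exists_natWalkWeight_eq_mpPow1 (B : ι → ι → ℝ) (m : ℕ) (i j : ι) :
    ∃ P : ℕ → ι, P 0 = i ∧ P (m + 1) = j ∧ natWalkWeight B (m + 1) P = mpPow1 B m i j := by
  induction m generalizing i with
  | zero => exact ⟨fun t => if t = 0 then i else j, rfl, rfl, by simp [natWalkWeight, mpPow1]⟩
  | succ m ih =>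
    have : Nonempty ι := ⟨i⟩
    obtain ⟨l, hl⟩ := exists_eq_ciSup_of_finite (f := fun l => B i l + mpPow1 B m l j)
    obtain ⟨P, hP0, hPj, hPw⟩ := ih l
    refine ⟨fun t => if t = 0 then i else P (t - 1), rfl, by simpa using hPj, ?_⟩
    rw [natWalkWeight_cons, hP0, hPw, hl]
    rfl

variable [DecidableEq ι]

lemma mpPow1_le_kleeneStar (B : ι → ι → ℝ) {m : ℕ} (hm : m < Fintype.card ι - 1) (i j : ι) :
    mpPow1 B m i j ≤ kleeneStar B i j := by
  have hle := le_ciSup (f := fun m' : Fin (Fintype.card ι - 1) => mpPow1 B m' i j)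
    (Finite.bddAbove_range _) ⟨m, hm⟩
  unfold kleeneStar
  split_ifs with h
  · subst h
    exact le_max_of_le_right hle
  · exact hle

lemma natWalkWeight_le_kleeneStar {B : ι → ι → ℝ}
    (hcyc : ∀ k P, 1 ≤ k → k ≤ Fintype.card ι → P 0 = P k → natWalkWeight B k P ≤ 0)
    (k : ℕ) (P : ℕ → ι) : natWalkWeight B k P ≤ kleeneStar B (P 0) (P k) := by
  induction k using Nat.strong_induction_on generalizing P with
  | _ k ih =>
    rcases lt_or_ge k (Fintype.card ι) with hk | hk
    · cases k with
      | zero => simp [natWalkWeight, kleeneStar]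
      | succ m =>
        exact (natWalkWeight_le_mpPow1 B m P).trans (mpPow1_le_kleeneStar B (by omega) _ _)
    · obtain ⟨k', hk', Q, hQ0, hQk, hle⟩ := exists_shorter_natWalkWeight_ge hcyc hk P
      rw [← hQ0, ← hQk]
      exact hle.trans (ih k' hk' Q)

lemma kleeneStar_le_of_forall_natWalkWeight_le {B : ι → ι → ℝ} {i j : ι} {r : ℝ} (hr : 0 ≤ r)
    (h : ∀ k P, 1 ≤ k → k < Fintype.card ι → P 0 = i → P k = j → natWalkWeight B k P ≤ r) :
    kleeneStar B i j ≤ r := by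
  have hpow : (⨆ m : Fin (Fintype.card ι - 1), mpPow1 B m i j) ≤ r := by
    refine Real.iSup_le (fun m => ?_) hr
    obtain ⟨P, hP0, hPj, hPw⟩ := exists_natWalkWeight_eq_mpPow1 B m i j
    exact hPw ▸ h _ P (by omega) (by omega) hP0 hPj
  unfold kleeneStar
  split_ifs with h
  · exact max_le hr (h ▸ hpow)
  · exact hpow

end KleeneStar

section Bellman

variable {ι : Type*} [Fintype ι]

/-- Bellman equation of optimal stopping on the digraph `D(B)`: standing at `i`, either stop
(payoff `0`) or move along an arc `i → j` and collect `B i j`. -/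
def IsBellmanSolution (B : ι → ι → ℝ) (z : ι → ℝ) : Prop :=
  ∀ i, z i = ⨆ j, max 0 (B i j + z j)

namespace IsBellmanSolution

variable {B : ι → ι → ℝ} {y z : ι → ℝ}

lemma nonneg (hz : IsBellmanSolution B z) (i : ι) : 0 ≤ z i := by
  rw [hz i]
  exact (le_max_left 0 (B i i + z i)).trans
    (le_ciSup (f := fun j => max 0 (B i j + z j)) (Finite.bddAbove_range _) i)

lemma add_le (hz : IsBellmanSolution B z) (i j : ι) : B i j + z j ≤ z i := by
  rw [hz i]
  exact (le_max_right 0 (B i j + z j)).trans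
    (le_ciSup (f := fun j => max 0 (B i j + z j)) (Finite.bddAbove_range _) j)

lemma exists_eq_add (hz : IsBellmanSolution B z) {i : ι} (hi : 0 < z i) :
    ∃ j, z i = B i j + z j := by
  have : Nonempty ι := ⟨i⟩
  obtain ⟨j, hj⟩ := exists_eq_ciSup_of_finite (f := fun j => max 0 (B i j + z j))
  refine ⟨j, ?_⟩
  rw [hz i, ← hj] at hi ⊢
  exact max_eq_right (le_of_not_ge fun h => hi.ne' (max_eq_left h))

end IsBellmanSolution

lemma exists_natWalkWeight_nonneg_cycle {B : ι → ι → ℝ} {z : ι → ℝ} {S : Set ι} {f : ι → ι}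
    (hf : ∀ u ∈ S, f u ∈ S ∧ z u ≤ B u (f u) + z (f u)) {i : ι} (hi : i ∈ S) :
    ∃ k P, 1 ≤ k ∧ k ≤ Fintype.card ι ∧ P 0 = P k ∧ 0 ≤ natWalkWeight B k P := by
  have hS : ∀ t, f^[t] i ∈ S := fun t => by
    induction t with
    | zero => exact hi
    | succ t ih => exact Function.iterate_succ_apply' f t i ▸ (hf _ ih).1
  obtain ⟨a, b, hab, hb, hP⟩ := exists_lt_le_card_eq fun t => f^[t] i
  refine ⟨b - a, fun t => f^[a + t] i, by omega, by omega, by simpa [hab.le] using hP, ?_⟩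
  have hcycle := sub_le_natWalkWeight (B := B) (z := z) (k := b - a) (P := fun t => f^[a + t] i)
    fun t _ => by simpa only [← add_assoc, Function.iterate_succ_apply'] using (hf _ (hS _)).2
  simpa [hab.le, hP] using hcycle

theorem IsBellmanSolution.le {B : ι → ι → ℝ}
    (hcyc : ∀ k P, 1 ≤ k → k ≤ Fintype.card ι → P 0 = P k → natWalkWeight B k P < 0)
    {y z : ι → ℝ} (hz : IsBellmanSolution B z) (hy : IsBellmanSolution B y) : z ≤ y := by
  by_contra hzy
  obtain ⟨i₀, hi₀⟩ : ∃ i, y i < z i := by simpa [Pi.le_def] using hzy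
  have : Nonempty ι := ⟨i₀⟩
  obtain ⟨i, hi⟩ := Finite.exists_max fun u => z u - y u
  have hstep : ∀ u, z u - y u = z i - y i → ∃ v, z v - y v = z i - y i ∧ z u ≤ B u v + z v := by
    intro u hu
    obtain ⟨v, hv⟩ := hz.exists_eq_add (by linarith [hi i₀, hy.nonneg u] : 0 < z u)
    exact ⟨v, le_antisymm (hi v) (by linarith [hy.add_le u v]), hv.le⟩
  choose! f hfS hf using hstep
  obtain ⟨k, P, hk1, hkc, hcl, hw⟩ :=
    exists_natWalkWeight_nonneg_cycle (S := {u | z u - y u = z i - y i})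
      (fun u hu => ⟨hfS u hu, hf u hu⟩) rfl
  exact (hcyc k P hk1 hkc hcl).not_ge hw

variable [DecidableEq ι]

theorem isBellmanSolution_iSup_kleeneStar {B : ι → ι → ℝ}
    (hcyc : ∀ k P, 1 ≤ k → k ≤ Fintype.card ι → P 0 = P k → natWalkWeight B k P ≤ 0) :
    IsBellmanSolution B fun i => ⨆ j, kleeneStar B i j := by
  intro i
  have : Nonempty ι := ⟨i⟩
  have hwalk : ∀ k P, natWalkWeight B k P ≤ ⨆ j, kleeneStar B (P 0) j := fun k P =>
    (natWalkWeight_le_kleeneStar hcyc k P).trans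
      (le_ciSup (f := kleeneStar B (P 0)) (Finite.bddAbove_range _) (P k))
  have hy0 : 0 ≤ ⨆ j, kleeneStar B i j := by simpa [natWalkWeight] using hwalk 0 fun _ => i
  have hcons : ∀ k P, B i (P 0) + natWalkWeight B k P ≤ ⨆ j, kleeneStar B i j := fun k P => by
    simpa [natWalkWeight_cons] using hwalk (k + 1) fun t => if t = 0 then i else P (t - 1)
  apply le_antisymm
  · have hR : ∀ j, max 0 (B i j + ⨆ l, kleeneStar B j l) ≤
        ⨆ j, max 0 (B i j + ⨆ l, kleeneStar B j l) := fun j =>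
      le_ciSup (f := fun j => max 0 (B i j + ⨆ l, kleeneStar B j l)) (Finite.bddAbove_range _) j
    refine ciSup_le fun l => kleeneStar_le_of_forall_natWalkWeight_le
      ((le_max_left _ _).trans (hR i)) fun k P hk _ hP0 _ => ?_
    obtain ⟨k, rfl⟩ := Nat.exists_eq_add_of_le' hk
    rw [natWalkWeight_succ, hP0]
    exact (add_le_add le_rfl (hwalk k _)).trans ((le_max_right _ _).trans (hR (P 1)))
  · refine ciSup_le fun j => max_le hy0 ?_
    have hBij : B i j ≤ ⨆ l, kleeneStar B i l := by simpa [natWalkWeight] using hcons 0 fun _ => j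
    suffices (⨆ l, kleeneStar B j l) ≤ (⨆ l, kleeneStar B i l) - B i j by linarith
    exact ciSup_le fun l => kleeneStar_le_of_forall_natWalkWeight_le (sub_nonneg.2 hBij)
      fun k P _ _ hP0 _ => by linarith [hP0 ▸ hcons k P]

end Bellman

section Reduction

variable {ι : Type*} [Fintype ι]

lemma natWalkWeight_sub_lt_zero_of_maxCycleMean_lt {A : ι → ι → ℝ} {lam : ℝ}
    (h : maxCycleMean A < lam) {k : ℕ} {P : ℕ → ι} (hk : 1 ≤ k) (hkc : k ≤ Fintype.card ι)
    (hP : P 0 = P k) : natWalkWeight (fun i j => A i j - lam) k P < 0 := by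
  have hk0 : (0 : ℝ) < k := by exact_mod_cast hk
  have hbdd : BddAbove {r | ∃ k, 1 ≤ k ∧ k ≤ Fintype.card ι ∧
      ∃ P : Fin (k + 1) → ι, P 0 = P (Fin.last k) ∧ r = walkWeight A k P / (k : ℝ)} := by
    refine ⟨⨆ p : ι × ι, A p.1 p.2, ?_⟩
    rintro r ⟨k, hk, -, P, -, rfl⟩
    rw [div_le_iff₀ (by exact_mod_cast hk)]
    calc walkWeight A k P ≤ ∑ _t : Fin k, ⨆ p : ι × ι, A p.1 p.2 :=
          sum_le_sum fun t _ => le_ciSup (f := fun p : ι × ι => A p.1 p.2)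
            (Finite.bddAbove_range _) (P t.castSucc, P t.succ)
      _ = _ := by simp [mul_comm]
  have hmean : natWalkWeight A k P / k < lam := by
    refine lt_of_le_of_lt (le_csSup hbdd ⟨k, hk, hkc, fun t => P t, by simpa using hP, ?_⟩) h
    rw [walkWeight_eq_natWalkWeight]
  have hsub : natWalkWeight (fun i j => A i j - lam) k P = natWalkWeight A k P - k * lam := by
    simp [natWalkWeight, sum_sub_distrib]
  rw [div_lt_iff₀ hk0] at hmean
  linarith

lemma lukMulVec_eq_lukSMul_iff_isBellmanSolution {A : ι → ι → ℝ} {lam : ℝ} {z : ι → ℝ}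
    (hz : ∀ i, 0 ≤ z i) :
    (∀ i, lukMulVec A (fun i => 1 - lam + z i) i = lukSMul lam (fun i => 1 - lam + z i) i) ↔
      IsBellmanSolution (fun i j => A i j - lam) z := by
  have hA : ∀ i j, A i j + (1 - lam + z j) - 1 = A i j - lam + z j := fun _ _ => by ring
  have hlam : ∀ i, lam + (1 - lam + z i) - 1 = z i := fun _ => by ring
  simp only [lukMulVec, lukSMul, IsBellmanSolution, hA, hlam, max_eq_right (hz _)]
  exact forall_congr' fun _ => eq_comm

end Reduction

theorem stmt8_general {n : ℕ} (A : Fin n → Fin n → ℝ)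
    (lam : ℝ) (hlam : lam ∈ Set.Icc (0 : ℝ) 1)
    (h1 : maxCycleMean A < lam)
    (h2 : ∀ i j, kleeneStar (fun i j => A i j - lam) i j ≤ lam) :
    ∀ x : Fin n → ℝ,
      ((∀ i, x i ∈ Set.Icc (0 : ℝ) 1) ∧ (∀ i, 1 - lam ≤ x i) ∧
        (∀ i, lukMulVec A x i = lukSMul lam x i)) ↔
      x = fun i => 1 - lam + ⨆ j, kleeneStar (fun i j => A i j - lam) i j := by
  intro x
  have hneg := fun k P => natWalkWeight_sub_lt_zero_of_maxCycleMean_lt (k := k) (P := P) h1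
  have hy := isBellmanSolution_iSup_kleeneStar fun k P hk hkc hP => (hneg k P hk hkc hP).le
  obtain ⟨z, rfl⟩ : ∃ z : Fin n → ℝ, x = fun i => 1 - lam + z i :=
    ⟨fun i => x i - (1 - lam), funext fun i => by ring⟩
  constructor
  · rintro ⟨-, hpure, heig⟩
    have hz := (lukMulVec_eq_lukSMul_iff_isBellmanSolution fun i => by linarith [hpure i]).1 heig
    rw [le_antisymm (hz.le hneg hy) (hy.le hneg hz)]
  · intro hx
    obtain rfl : z = fun i => ⨆ j, kleeneStar (fun i j => A i j - lam) i j :=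
      funext fun i => by simpa using congrFun hx i
    refine ⟨fun i => ⟨?_, ?_⟩, fun i => ?_,
      (lukMulVec_eq_lukSMul_iff_isBellmanSolution hy.nonneg).2 hy⟩
    · linarith [hy.nonneg i, hlam.2]
    · linarith [Real.iSup_le (h2 i) hlam.1]
    · linarith [hy.nonneg i]

/-- if `ρ(A) < λ` and `max_{i,j} ((A^{(λ)})*)_{ij} ≤ λ` then the unique pure
Łukasiewicz eigenvector associated with `λ` is `x_i = 1 - λ + max_j ((A^{(λ)})*)_{ij}`. -/
theorem stmt8 {n : ℕ} (hn : 0 < n) (A : Fin n → Fin n → ℝ)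
    (hA : ∀ i j, A i j ∈ Set.Icc (0 : ℝ) 1) (lam : ℝ) (hlam : lam ∈ Set.Icc (0 : ℝ) 1)
    (h1 : maxCycleMean A < lam)
    (h2 : ∀ i j, kleeneStar (fun i j => A i j - lam) i j ≤ lam) :
    ∀ x : Fin n → ℝ,
      ((∀ i, x i ∈ Set.Icc (0 : ℝ) 1) ∧ (∀ i, 1 - lam ≤ x i) ∧
        (∀ i, lukMulVec A x i = lukSMul lam x i)) ↔
      x = fun i => 1 - lam + ⨆ j, kleeneStar (fun i j => A i j - lam) i j :=
  stmt8_general A lam hlam h1 h2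
end

section
/- Let A ∈ [0,1]^{n×n}. A nonzero Łukasiewicz eigenvector of A associated with λ = 1 exists if and only if ρ(A) = 1; moreover, for λ = 1 every Łukasiewicz eigenvector is pure (its components automatically satisfy x_i ≥ 1 − λ = 0). -/
open Finset

/-! For `λ = 1` the eigen-equation reads `x = A ⊗_L x` (as `x ≥ 0`). If `x ≠ 0`, every node where
`x` attains its positive maximum `M` has an arc into that set of weight `1`, since
`M = a_{ij} + x_j - 1` with `a_{ij} ≤ 1`, `x_j ≤ M`; following such arcs gives a cycle of mean `1`,
and no cycle mean exceeds `1`. Conversely, the nodes of a cycle of mean `1` carry only arcs of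
weight `1`, so their indicator vector `v` satisfies `v ≤ A ⊗_L v`; by Knaster–Tarski the greatest
fixed point of `x ↦ A ⊗_L x` on the complete lattice `[0,1]^n` lies above `v`, hence is nonzero. -/

open Set

variable {ι : Type*}

lemma walkWeight_le_length {A : ι → ι → ℝ} (hA : ∀ i j, A i j ≤ 1) (k : ℕ)
    (P : Fin (k + 1) → ι) : walkWeight A k P ≤ k := by
  simpa [walkWeight] using
    Finset.sum_le_sum (s := Finset.univ) fun (t : Fin k) _ => hA (P t.castSucc) (P t.succ)

lemma walkWeight_eq_length_iff {A : ι → ι → ℝ} (hA : ∀ i j, A i j ≤ 1) {k : ℕ}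
    {P : Fin (k + 1) → ι} :
    walkWeight A k P = k ↔ ∀ t : Fin k, A (P t.castSucc) (P t.succ) = 1 := by
  simpa [walkWeight] using
    Finset.sum_eq_sum_iff_of_le (s := Finset.univ) fun (t : Fin k) _ => hA (P t.castSucc) (P t.succ)

lemma lukSMul_one {x : ι → ℝ} {i : ι} (hx : 0 ≤ x i) : lukSMul 1 x i = x i := by
  rw [lukSMul, add_sub_cancel_left, max_eq_right hx]

variable [Fintype ι]

lemma exists_lt_iterate_eq (g : ι → ι) (x : ι) :
    ∃ a b, a < b ∧ b ≤ Fintype.card ι ∧ g^[a] x = g^[b] x := by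
  obtain ⟨s, t, hst, heq⟩ := Fintype.exists_ne_map_eq_of_card_lt
    (fun s : Fin (Fintype.card ι + 1) => g^[s] x) (by simp)
  rcases (Fin.val_injective.ne hst).lt_or_gt with h | h
  · exact ⟨s, t, h, Nat.lt_succ_iff.1 t.2, heq⟩
  · exact ⟨t, s, h, Nat.lt_succ_iff.1 s.2, heq.symm⟩

theorem exists_closed_walk_of_forall_exists (R : ι → ι → Prop) {S : Set ι} (hS : S.Nonempty)
    (hR : ∀ i ∈ S, ∃ j ∈ S, R i j) :
    ∃ k, 1 ≤ k ∧ k ≤ Fintype.card ι ∧ ∃ P : Fin (k + 1) → ι, P 0 = P (Fin.last k) ∧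
      ∀ t : Fin k, R (P t.castSucc) (P t.succ) := by
  choose! g hgS hgR using hR
  obtain ⟨x, hx⟩ := hS
  have hiter : ∀ m, g^[m] x ∈ S := by
    intro m
    induction m with
    | zero => exact hx
    | succ m ih => rw [Function.iterate_succ_apply']; exact hgS _ ih
  obtain ⟨a, b, hab, hb, heq⟩ := exists_lt_iterate_eq g x
  refine ⟨b - a, by omega, by omega, fun u => g^[a + u] x, ?_, fun t => ?_⟩
  · simp [Nat.add_sub_cancel' hab.le, heq]
  · simpa [← add_assoc, Function.iterate_succ_apply'] using hgR _ (hiter (a + t))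

section CycleMeans

variable {A : ι → ι → ℝ}

def cycleMeans (A : ι → ι → ℝ) : Set ℝ :=
  { r | ∃ k, 1 ≤ k ∧ k ≤ Fintype.card ι ∧
    ∃ P : Fin (k + 1) → ι, P 0 = P (Fin.last k) ∧ r = walkWeight A k P / (k : ℝ) }

lemma maxCycleMean_eq_sSup_cycleMeans (A : ι → ι → ℝ) :
    maxCycleMean A = sSup (cycleMeans A) :=
  rfl

lemma cycleMeans_finite (A : ι → ι → ℝ) : (cycleMeans A).Finite := by
  refine ((finite_Iic (Fintype.card ι)).biUnion fun k _ =>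
    finite_range fun P : Fin (k + 1) → ι => walkWeight A k P / k).subset ?_
  rintro r ⟨k, -, hk, P, -, rfl⟩
  exact mem_biUnion hk ⟨P, rfl⟩

lemma le_one_of_mem_cycleMeans (hA : ∀ i j, A i j ≤ 1) {r : ℝ} (hr : r ∈ cycleMeans A) :
    r ≤ 1 := by
  obtain ⟨k, -, -, P, -, rfl⟩ := hr
  exact div_le_one_of_le₀ (walkWeight_le_length hA k P) k.cast_nonneg

lemma maxCycleMean_le_one (hA : ∀ i j, A i j ≤ 1) : maxCycleMean A ≤ 1 :=
  Real.sSup_le (fun _ => le_one_of_mem_cycleMeans hA) zero_le_one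

lemma maxCycleMean_eq_one_iff_one_mem (hA : ∀ i j, A i j ≤ 1) :
    maxCycleMean A = 1 ↔ (1 : ℝ) ∈ cycleMeans A := by
  refine ⟨fun h => ?_, fun h => (maxCycleMean_le_one hA).antisymm
    (le_csSup ⟨1, fun _ => le_one_of_mem_cycleMeans hA⟩ h)⟩
  rw [maxCycleMean_eq_sSup_cycleMeans] at h
  have hne : (cycleMeans A).Nonempty := by
    by_contra hempty
    rw [not_nonempty_iff_eq_empty.1 hempty, Real.sSup_empty] at h
    exact zero_ne_one h
  exact h ▸ hne.csSup_mem (cycleMeans_finite A)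

/-- The arcs of weight `1` of `D(A)` contain a cycle, encoded as a nonempty set of nodes each of
which has an arc of weight `1` back into the set. -/
def HasUnitCycle (A : ι → ι → ℝ) : Prop :=
  ∃ S : Set ι, S.Nonempty ∧ ∀ i ∈ S, ∃ j ∈ S, A i j = 1

lemma one_mem_cycleMeans_iff (hA : ∀ i j, A i j ≤ 1) :
    (1 : ℝ) ∈ cycleMeans A ↔ HasUnitCycle A := by
  constructor
  · rintro ⟨k, hk, -, P, hP, hmean⟩
    have harc := (walkWeight_eq_length_iff hA).1
      (by rw [eq_div_iff (by positivity)] at hmean; linarith)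
    refine ⟨range P, range_nonempty P, ?_⟩
    rintro _ ⟨u, rfl⟩
    rcases Fin.eq_castSucc_or_eq_last u with ⟨t, rfl⟩ | rfl
    · exact ⟨P t.succ, mem_range_self _, harc t⟩
    · exact ⟨P (⟨0, hk⟩ : Fin k).succ, mem_range_self _, hP ▸ harc ⟨0, hk⟩⟩
  · rintro ⟨S, hS, hR⟩
    obtain ⟨k, hk, hkcard, P, hP, harc⟩ := exists_closed_walk_of_forall_exists _ hS hR
    refine ⟨k, hk, hkcard, P, hP, ?_⟩
    rw [(walkWeight_eq_length_iff hA).2 harc, div_self (by positivity)]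

theorem maxCycleMean_eq_one_iff (hA : ∀ i j, A i j ≤ 1) :
    maxCycleMean A = 1 ↔ HasUnitCycle A :=
  (maxCycleMean_eq_one_iff_one_mem hA).trans (one_mem_cycleMeans_iff hA)

end CycleMeans

section Eigenvectors

variable {A : ι → ι → ℝ} {x y : ι → ℝ}

lemma le_lukMulVec (A : ι → ι → ℝ) (x : ι → ℝ) (i j : ι) :
    max 0 (A i j + x j - 1) ≤ lukMulVec A x i :=
  le_ciSup (f := fun j => max 0 (A i j + x j - 1)) (Finite.bddAbove_range _) j

lemma exists_lukMulVec_eq [Nonempty ι] (A : ι → ι → ℝ) (x : ι → ℝ) (i : ι) :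
    ∃ j, lukMulVec A x i = max 0 (A i j + x j - 1) :=
  exists_eq_ciSup_of_finite.imp fun _ h => h.symm

lemma lukMulVec_mono (hxy : ∀ j, x j ≤ y j) (i : ι) : lukMulVec A x i ≤ lukMulVec A y i :=
  ciSup_mono (Finite.bddAbove_range _) fun j => max_le_max le_rfl (by linarith [hxy j])

lemma lukMulVec_mem_Icc (hA : ∀ i j, A i j ≤ 1) (hx : ∀ j, x j ≤ 1) (i : ι) :
    lukMulVec A x i ∈ Set.Icc 0 1 :=
  ⟨Real.iSup_nonneg fun _ => le_max_left _ _,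
    Real.iSup_le (fun j => max_le zero_le_one (by linarith [hA i j, hx j])) zero_le_one⟩

theorem hasUnitCycle_of_lukMulVec_eq (hA : ∀ i j, A i j ≤ 1) (hx₀ : ∀ i, 0 ≤ x i) (hx : x ≠ 0)
    (heig : ∀ i, lukMulVec A x i = x i) : HasUnitCycle A := by
  obtain ⟨i₁, hi₁⟩ := Function.ne_iff.1 hx
  have : Nonempty ι := ⟨i₁⟩
  obtain ⟨i₀, hi₀⟩ := exists_eq_ciSup_of_finite (f := x)
  set M := ⨆ i, x i
  have hle : ∀ i, x i ≤ M := le_ciSup (Finite.bddAbove_range x)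
  have hM : 0 < M := ((hx₀ i₁).lt_of_ne (Ne.symm hi₁)).trans_le (hle i₁)
  refine ⟨{i | x i = M}, ⟨i₀, hi₀⟩, fun i (hi : x i = M) => ?_⟩
  obtain ⟨j, hj⟩ := exists_lukMulVec_eq A x i
  rw [heig i, hi] at hj
  have hMj : M ≤ A i j + x j - 1 := (le_max_iff.1 hj.le).resolve_left hM.not_ge
  exact ⟨j, by show x j = M; linarith [hA i j, hle j], by linarith [hA i j, hle j]⟩

noncomputable def lukOrderHom (hA : ∀ i j, A i j ≤ 1) :
    (ι → Set.Icc (0 : ℝ) 1) →o (ι → Set.Icc (0 : ℝ) 1) where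
  toFun x i := ⟨lukMulVec A (fun j => x j) i, lukMulVec_mem_Icc hA (fun j => (x j).2.2) i⟩
  monotone' _ _ hxy i := lukMulVec_mono (fun j => hxy j) i

theorem exists_lukMulVec_eq_of_hasUnitCycle (hA : ∀ i j, A i j ≤ 1) (h : HasUnitCycle A) :
    ∃ x : ι → ℝ, (∀ i, x i ∈ Set.Icc (0 : ℝ) 1) ∧ x ≠ 0 ∧ ∀ i, lukMulVec A x i = x i := by
  classical
  obtain ⟨S, ⟨i₀, hi₀⟩, hS⟩ := h
  let T := lukOrderHom hA
  let v : ι → Set.Icc (0 : ℝ) 1 := fun i => if i ∈ S then ⊤ else ⊥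
  have hv : v ≤ T v := by
    intro i
    by_cases hi : i ∈ S
    · obtain ⟨j, hj, hij⟩ := hS i hi
      show (v i : ℝ) ≤ lukMulVec A (fun j => v j) i
      calc (v i : ℝ) = max 0 (A i j + v j - 1) := by simp [v, hi, hj, hij]
        _ ≤ _ := le_lukMulVec A (fun j => v j) i j
    · simp [v, hi]
  refine ⟨fun i => T.gfp i, fun i => (T.gfp i).2, fun h0 => ?_,
    fun i => congrArg Subtype.val (congrFun T.map_gfp i)⟩
  have h1 : T.gfp i₀ = ⊤ := by simpa [v, hi₀] using T.le_gfp hv i₀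
  have h2 : (T.gfp i₀ : ℝ) = 0 := congrFun h0 i₀
  simp [h1] at h2

end Eigenvectors

theorem stmt10_general {n : ℕ} (A : Fin n → Fin n → ℝ)
    (hA : ∀ i j, A i j ∈ Set.Icc (0 : ℝ) 1) :
    ((∃ x : Fin n → ℝ, (∀ i, x i ∈ Set.Icc (0 : ℝ) 1) ∧ x ≠ 0 ∧
        ∀ i, lukMulVec A x i = lukSMul 1 x i) ↔ maxCycleMean A = 1) ∧
      ∀ x : Fin n → ℝ, (∀ i, x i ∈ Set.Icc (0 : ℝ) 1) →
        (∀ i, lukMulVec A x i = lukSMul 1 x i) → ∀ i, 1 - 1 ≤ x i := by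
  have hA₁ : ∀ i j, A i j ≤ 1 := fun i j => (hA i j).2
  have hsmul : ∀ x : Fin n → ℝ, (∀ i, x i ∈ Set.Icc (0 : ℝ) 1) → ∀ i, lukSMul 1 x i = x i :=
    fun x hx i => lukSMul_one (hx i).1
  refine ⟨⟨fun ⟨x, hx, hx0, heig⟩ => ?_, fun h => ?_⟩, fun x hx _ i => by simpa using (hx i).1⟩
  · exact (maxCycleMean_eq_one_iff hA₁).2 <| hasUnitCycle_of_lukMulVec_eq hA₁
      (fun i => (hx i).1) hx0 fun i => (heig i).trans (hsmul x hx i)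
  · obtain ⟨x, hx, hx0, heig⟩ :=
      exists_lukMulVec_eq_of_hasUnitCycle hA₁ ((maxCycleMean_eq_one_iff hA₁).1 h)
    exact ⟨x, hx, hx0, fun i => (heig i).trans (hsmul x hx i).symm⟩

/-- a nonzero Łukasiewicz eigenvector associated with `λ = 1` exists iff
`ρ(A) = 1`; moreover every Łukasiewicz eigenvector for `λ = 1` is pure
(all its components are `≥ 1 - 1 = 0`). -/
theorem stmt10 {n : ℕ} (hn : 0 < n) (A : Fin n → Fin n → ℝ)
    (hA : ∀ i j, A i j ∈ Set.Icc (0 : ℝ) 1) :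
    ((∃ x : Fin n → ℝ, (∀ i, x i ∈ Set.Icc (0 : ℝ) 1) ∧ x ≠ 0 ∧
        ∀ i, lukMulVec A x i = lukSMul 1 x i) ↔ maxCycleMean A = 1) ∧
      ∀ x : Fin n → ℝ, (∀ i, x i ∈ Set.Icc (0 : ℝ) 1) →
        (∀ i, lukMulVec A x i = lukSMul 1 x i) → ∀ i, 1 - 1 ≤ x i :=
  stmt10_general A hA
end
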